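/- arXiv:1206.7047 — 4 statements merged into one kernel-verified Lean document; each statement's English description precedes it below -/
import Mathlib

section
/- Let q be a prime power, r ≥ 1, K a field containing F_q(t), and let g_0 = t, g_1, …, g_{r-1} ∈ K[z]. Define Φ_t(x) = Σ_{i=0}^{r-1} g_i(z)·x^{q^i} + x^{q^r} ∈ K[z][x]. Let c ∈ K[z] with m := deg_z(c) > max_{0 ≤ i ≤ r-1} deg(g_i)/(q^r − q^i). Then for every n ≥ 1, the polynomial f_n(z) := Φ_{t^n}(c(z)) (the n-fold composition of Φ_t in the x-variable applied to c) has degree m·q^{rn} in z, and its leading coefficient is C^{q^{rn}} where C is the leading coefficient of c. -/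
open Polynomial

lemma stmt1_step {K : Type*} [Field K] (q r : ℕ) (hq2 : 2 ≤ q) (hr : 1 ≤ r)
    (g : ℕ → Polynomial K) (Φ : Polynomial K → Polynomial K)
    (hΦ : ∀ x : Polynomial K,
      Φ x = (∑ i ∈ Finset.range r, g i * x ^ q ^ i) + x ^ q ^ r)
    (c : Polynomial K)
    (hdeg : ∀ i < r, (g i).natDegree < c.natDegree * (q ^ r - q ^ i)) :
    (Φ c).natDegree = c.natDegree * q ^ r ∧
    (Φ c).leadingCoeff = c.leadingCoeff ^ q ^ r := by
  set m := c.natDegree with hm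
  have hm0 : 0 < m := by
    have h0 := hdeg 0 hr
    by_contra h
    simp only [not_lt, Nat.le_zero] at h
    rw [h] at h0; simp at h0
  have hc : c ≠ 0 := fun h => by simp [hm, h] at hm0
  have hqr : (1:ℕ) < q ^ r := one_lt_pow₀ (by omega) (by omega)
  have hS : ∀ i ∈ Finset.range r, (g i * c ^ q ^ i).natDegree ≤ m * q ^ r - 1 := by
    intro i hi
    rw [Finset.mem_range] at hi
    have h1 : (g i * c ^ q ^ i).natDegree ≤ (g i).natDegree + (c ^ q ^ i).natDegree :=
      natDegree_mul_le
    have h2 : (c ^ q ^ i).natDegree = q ^ i * m := by rw [natDegree_pow]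
    have h3 := hdeg i hi
    have h4 : q ^ i ≤ q ^ r := Nat.pow_le_pow_right (by omega) (le_of_lt hi)
    have h5 : m * (q ^ r - q ^ i) + q ^ i * m = m * q ^ r := by
      zify [h4]; ring
    omega
  have hSlt : (∑ i ∈ Finset.range r, g i * c ^ q ^ i).natDegree < m * q ^ r := by
    have h1 : 0 < m * q ^ r := Nat.mul_pos hm0 (by omega)
    have h2 := Polynomial.natDegree_sum_le_of_forall_le (Finset.range r)
      (fun i => g i * c ^ q ^ i) hS
    exact lt_of_le_of_lt h2 (by omega)
  have hcp : (c ^ q ^ r) ≠ 0 := pow_ne_zero _ hc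
  have hdcp : (c ^ q ^ r).natDegree = m * q ^ r := by rw [natDegree_pow]; ring
  have hdegS : (∑ i ∈ Finset.range r, g i * c ^ q ^ i).degree < (c ^ q ^ r).degree := by
    calc (∑ i ∈ Finset.range r, g i * c ^ q ^ i).degree
        ≤ ((∑ i ∈ Finset.range r, g i * c ^ q ^ i).natDegree : WithBot ℕ) :=
          degree_le_natDegree
      _ < ((m * q ^ r : ℕ) : WithBot ℕ) := by exact_mod_cast hSlt
      _ = (c ^ q ^ r).degree := by rw [degree_eq_natDegree hcp, hdcp]
  constructor
  · rw [hΦ, natDegree_add_eq_right_of_natDegree_lt (by rw [hdcp]; exact hSlt), hdcp]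
  · rw [hΦ, leadingCoeff_add_of_degree_lt hdegS, leadingCoeff_pow]

/-- with g_0 = C t and Φ_t(x) = Σ_{i=0}^{r-1} g_i(z) x^{q^i} + x^{q^r}
acting on K[z], if m = deg c satisfies m·(q^r - q^i) > deg g_i for all i < r, then
for every n ≥ 1 the iterate Φ_{t^n}(c) has z-degree m·q^{rn} and leading coefficient
C^{q^{rn}}, where C is the leading coefficient of c. -/
theorem stmt1 {K : Type*} [Field K] (p k q : ℕ) [Fact p.Prime] [CharP K p]
    (hk : 0 < k) (hq : q = p ^ k) (r : ℕ) (hr : 1 ≤ r)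
    (t : K) (g : ℕ → Polynomial K) (hg0 : g 0 = Polynomial.C t)
    (Φ : Polynomial K → Polynomial K)
    (hΦ : ∀ x : Polynomial K,
      Φ x = (∑ i ∈ Finset.range r, g i * x ^ q ^ i) + x ^ q ^ r)
    (c : Polynomial K) (m : ℕ) (hm : m = c.natDegree)
    (hdeg : ∀ i < r, (g i).natDegree < m * (q ^ r - q ^ i)) :
    ∀ n : ℕ, 1 ≤ n →
      (Φ^[n] c).natDegree = m * q ^ (r * n) ∧
      (Φ^[n] c).leadingCoeff = c.leadingCoeff ^ q ^ (r * n) := by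
  have hq2 : 2 ≤ q := by
    have hp : 2 ≤ p := (Fact.out : p.Prime).two_le
    calc 2 ≤ p := hp
      _ = p ^ 1 := (pow_one p).symm
      _ ≤ p ^ k := Nat.pow_le_pow_right (by omega) hk
      _ = q := hq.symm
  have hm0 : 0 < m := by
    have h0 := hdeg 0 hr
    by_contra h
    simp only [not_lt, Nat.le_zero] at h
    rw [h] at h0; simp at h0
  have key : ∀ n : ℕ,
      (Φ^[n] c).natDegree = m * q ^ (r * n) ∧
      (Φ^[n] c).leadingCoeff = c.leadingCoeff ^ q ^ (r * n) := by
    intro n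
    induction n with
    | zero => simp [hm]
    | succ n ih =>
      obtain ⟨ihd, ihl⟩ := ih
      have hdeg' : ∀ i < r, (g i).natDegree < (Φ^[n] c).natDegree * (q ^ r - q ^ i) := by
        intro i hi
        have h1 := hdeg i hi
        have h2 : m ≤ m * q ^ (r * n) := Nat.le_mul_of_pos_right m (by positivity)
        have h3 : m * (q ^ r - q ^ i) ≤ (m * q ^ (r * n)) * (q ^ r - q ^ i) :=
          Nat.mul_le_mul_right _ h2
        rw [ihd]; omega
      obtain ⟨hd, hl⟩ := stmt1_step q r hq2 hr g Φ hΦ (Φ^[n] c) hdeg'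
      rw [Function.iterate_succ_apply']
      constructor
      · rw [hd, ihd, mul_assoc, ← pow_add, Nat.mul_succ]
      · rw [hl, ihl, ← pow_mul, ← pow_add, Nat.mul_succ]
  exact fun n _ => key n
end

section
/- Let q be a prime power, r ≥ 1, K a field containing F_q(t), g_1,…,g_{r-1} ∈ K[z] nonconstant or constant, and Φ_t(x) = t·x + Σ g_i(z) x^{q^i} + x^{q^r}. If c ∈ K[z] satisfies deg(c) > max_i deg(g_i)/(q^r − q^i) (with g_0 = t), then the sequence of degrees deg_z(Φ_{t^n}(c)) tends to infinity; in particular c is not preperiodic under x ↦ Φ_t(x) over K[z]. -/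
/-- under the degree hypothesis on c, the degrees of the iterates
Φ_{t^n}(c) tend to infinity; in particular c is not preperiodic under Φ_t over K[z]. -/
theorem stmt2 {K : Type*} [Field K] (p k q : ℕ) [Fact p.Prime] [CharP K p]
    (hk : 0 < k) (hq : q = p ^ k) (r : ℕ) (hr : 1 ≤ r)
    (t : K) (g : ℕ → Polynomial K) (hg0 : g 0 = Polynomial.C t)
    (Φ : Polynomial K → Polynomial K)
    (hΦ : ∀ x : Polynomial K,
      Φ x = (∑ i ∈ Finset.range r, g i * x ^ q ^ i) + x ^ q ^ r)
    (c : Polynomial K)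
    (hdeg : ∀ i < r, (g i).natDegree < c.natDegree * (q ^ r - q ^ i)) :
    Filter.Tendsto (fun n : ℕ => (Φ^[n] c).natDegree) Filter.atTop Filter.atTop ∧
      (Set.range fun n : ℕ => Φ^[n] c).Infinite := by
  have hq2 : 2 ≤ q := by
    have hp : 2 ≤ p := (Fact.out : p.Prime).two_le
    calc 2 = 2 ^ 1 := by norm_num
    _ ≤ p ^ k := Nat.pow_le_pow_left hp 1 |>.trans (Nat.pow_le_pow_right (by omega) hk)
    _ = q := hq.symm
  set d := c.natDegree with hd_def
  have hd : 0 < d := by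
    have h0 := hdeg 0 (by omega)
    rw [hg0] at h0
    simp only [Polynomial.natDegree_C] at h0
    rcases Nat.eq_zero_or_pos d with h | h
    · simp [h] at h0
    · exact h
  have hDq : 2 ≤ q ^ r := by
    calc 2 = 2 ^ 1 := by norm_num
    _ ≤ q ^ r := Nat.pow_le_pow_left hq2 1 |>.trans (Nat.pow_le_pow_right (by omega) hr)
  -- main degree lemma
  have key : ∀ x : Polynomial K, d ≤ x.natDegree →
      (Φ x).natDegree = q ^ r * x.natDegree := by
    intro x hx
    have hx0 : x ≠ 0 := by
      intro h; rw [h] at hx; simp at hx; omega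
    have hpow : (x ^ q ^ r).natDegree = q ^ r * x.natDegree := by
      rw [Polynomial.natDegree_pow]
    have hsum : (∑ i ∈ Finset.range r, g i * x ^ q ^ i).natDegree
        < q ^ r * x.natDegree := by
      have hb : (∑ i ∈ Finset.range r, g i * x ^ q ^ i).natDegree
          ≤ q ^ r * x.natDegree - 1 := by
        apply Polynomial.natDegree_sum_le_of_forall_le
        intro i hi
        rw [Finset.mem_range] at hi
        have h1 : (g i * x ^ q ^ i).natDegree ≤ (g i).natDegree + q ^ i * x.natDegree := by
          refine (Polynomial.natDegree_mul_le).trans ?_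
          gcongr
          rw [Polynomial.natDegree_pow]
        have h2 : (g i).natDegree + q ^ i * x.natDegree < q ^ r * x.natDegree := by
          have hqi : q ^ i ≤ q ^ r := Nat.pow_le_pow_right (by omega) (le_of_lt hi)
          have := hdeg i hi
          calc (g i).natDegree + q ^ i * x.natDegree
              < d * (q ^ r - q ^ i) + q ^ i * x.natDegree := by omega
          _ ≤ x.natDegree * (q ^ r - q ^ i) + q ^ i * x.natDegree := by
              gcongr
          _ = q ^ r * x.natDegree := by
              rw [mul_comm (q ^ i)]
              rw [← Nat.mul_add, Nat.sub_add_cancel hqi, mul_comm]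
        omega
      have hxpos : 0 < x.natDegree := lt_of_lt_of_le hd hx
      have hpos : 0 < q ^ r * x.natDegree := by positivity
      omega
    rw [hΦ, Polynomial.natDegree_add_eq_right_of_natDegree_lt (by rw [hpow]; exact hsum),
      hpow]
  have iter : ∀ n : ℕ, (Φ^[n] c).natDegree = (q ^ r) ^ n * d := by
    intro n
    induction n with
    | zero => simp [hd_def]
    | succ n ih =>
      rw [Function.iterate_succ_apply', key _ (by rw [ih]; exact Nat.le_mul_of_pos_left d (by positivity)), ih, pow_succ, mul_assoc]
      ring
  have hmono : StrictMono fun n : ℕ => (q ^ r) ^ n * d := by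
    intro m n hmn
    exact (Nat.mul_lt_mul_right hd).mpr (Nat.pow_lt_pow_right (by omega) hmn)
  constructor
  · have : Filter.Tendsto (fun n : ℕ => (q ^ r) ^ n * d) Filter.atTop Filter.atTop :=
      hmono.tendsto_atTop
    simpa only [iter] using this
  · apply Set.infinite_range_of_injective
    intro m n hmn
    have h2 := congrArg Polynomial.natDegree hmn
    simp only [iter] at h2
    exact hmono.injective h2
end

section
/- Let q be a prime power, r ≥ 2, K a field extension of F_q(t) in which F_q is algebraically closed, and for λ ∈ K̄ let Φ^λ_t(x) = t·x + λ·x^q + x^{q^r}. Let a ∈ K be nonzero. Then there exist infinitely many λ ∈ K̄ such that a is a torsion point of Φ^λ. (Specifically, for each monic irreducible f ∈ F_q[t] there exists λ_f ∈ K̄ with Φ^{λ_f}_f(a) = 0, and distinct f give rise to infinitely many distinct λ.) -/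
open Polynomial

noncomputable section Stmt13Aux

variable {R : Type*} [Field R]

/-- The polynomial (in the parameter λ) representing `Φ^λ_{t^n}(a)`. -/
def stmt13Q (q r : ℕ) (T A : R) : ℕ → Polynomial R
  | 0 => C A
  | n + 1 => C T * stmt13Q q r T A n + X * (stmt13Q q r T A n) ^ q
      + (stmt13Q q r T A n) ^ (q ^ r)


theorem stmt13_degree_C_mul_le (a : R) (pp : Polynomial R) :
    (C a * pp).degree ≤ pp.degree := by
  refine (degree_mul_le _ _).trans ?_
  calc (C a).degree + pp.degree ≤ 0 + pp.degree := add_le_add_left degree_C_le _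
    _ = pp.degree := zero_add _

theorem stmt13Q_spec {q r : ℕ} (hq : 2 ≤ q) (hr : 2 ≤ r) (T : R) {A : R} (hA : A ≠ 0) :
    ∀ n, 1 ≤ n → (stmt13Q q r T A n).natDegree = q ^ (r * (n - 1)) ∧
      (stmt13Q q r T A n).leadingCoeff = A ^ (q ^ (1 + r * (n - 1))) := by
  intro n
  induction n with
  | zero => omega
  | succ m ih =>
    intro _
    rcases Nat.eq_zero_or_pos m with rfl | hm
    · -- base case: n = 1
      have hAq : A ^ q ≠ 0 := pow_ne_zero _ hA
      have hform : stmt13Q q r T A 1 = C (A ^ q) * X + C (T * A + A ^ q ^ r) := by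
        simp only [stmt13Q]
        rw [← C_pow, ← C_pow, ← C_mul, map_add]
        ring
      constructor
      · rw [hform, natDegree_linear hAq]; simp
      · rw [hform, leadingCoeff_linear hAq]; simp [pow_one]
    · obtain ⟨hd, hL⟩ := ih hm
      set P := stmt13Q q r T A m with hP
      set d := q ^ (r * (m - 1)) with hdd
      have hd1 : 1 ≤ d := Nat.one_le_pow _ _ (by omega)
      have hLne : P.leadingCoeff ≠ 0 := by
        rw [hL]; exact pow_ne_zero _ hA
      have hP0 : P ≠ 0 := fun h => hLne (by rw [h, leadingCoeff_zero])
      have hdegP : P.degree = (d : WithBot ℕ) := by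
        rw [degree_eq_natDegree hP0, hd]
      have hq2r : q ^ 2 ≤ q ^ r := Nat.pow_le_pow_right (by omega) hr
      have h2q : 2 * q ≤ q ^ 2 := by
        calc 2 * q ≤ q * q := Nat.mul_le_mul_right q hq
          _ = q ^ 2 := (pow_two q).symm
      have hqd2 : 2 ≤ q * d := le_trans (by omega) (Nat.mul_le_mul hq hd1)
      have h5 : q * d + q * d ≤ q ^ r * d := by
        calc q * d + q * d = (2 * q) * d := by ring
          _ ≤ q ^ r * d := Nat.mul_le_mul_right d (h2q.trans hq2r)
      have hineq : 1 + q * d < q ^ r * d := by linarith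
      have hdlt : d < q ^ r * d := by
        have h6 : 2 ≤ q ^ r := le_trans (le_trans (by omega) h2q) hq2r
        calc d < 2 * d := by omega
          _ ≤ q ^ r * d := Nat.mul_le_mul_right d h6
      -- main term
      have hmain0 : P ^ (q ^ r) ≠ 0 := pow_ne_zero _ hP0
      have hmaindeg : (P ^ (q ^ r)).degree = ((q ^ r * d : ℕ) : WithBot ℕ) := by
        rw [degree_eq_natDegree hmain0, Polynomial.natDegree_pow, hd]
      -- rest has smaller degree
      have h1 : (C T * P).degree < ((q ^ r * d : ℕ) : WithBot ℕ) := by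
        refine lt_of_le_of_lt (stmt13_degree_C_mul_le _ _) ?_
        rw [hdegP]; exact_mod_cast hdlt
      have hXPq0 : X * P ^ q ≠ 0 := mul_ne_zero X_ne_zero (pow_ne_zero _ hP0)
      have h2 : (X * P ^ q).degree < ((q ^ r * d : ℕ) : WithBot ℕ) := by
        have hnd : (X * P ^ q).natDegree = 1 + q * d := by
          rw [natDegree_mul X_ne_zero (pow_ne_zero _ hP0), natDegree_X,
            Polynomial.natDegree_pow, hd]
        rw [degree_eq_natDegree hXPq0, hnd]
        exact_mod_cast hineq
      have hrest : (C T * P + X * P ^ q).degree < (P ^ (q ^ r)).degree := by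
        rw [hmaindeg]
        exact lt_of_le_of_lt (degree_add_le _ _) (max_lt h1 h2)
      have hQsucc : stmt13Q q r T A (m + 1) = (C T * P + X * P ^ q) + P ^ (q ^ r) := by
        simp only [stmt13Q, ← hP]
        try ring
      have hdeq : (stmt13Q q r T A (m + 1)).degree = (P ^ (q ^ r)).degree := by
        rw [hQsucc]; exact degree_add_eq_right_of_degree_lt hrest
      have hlc : (stmt13Q q r T A (m + 1)).leadingCoeff = (P ^ (q ^ r)).leadingCoeff := by
        rw [hQsucc]; exact leadingCoeff_add_of_degree_lt hrest
      have harith : r * (m + 1 - 1) = r * (m - 1) + r := by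
        obtain ⟨m', rfl⟩ : ∃ m', m = m' + 1 := ⟨m - 1, by omega⟩
        simp; ring
      constructor
      · have : (stmt13Q q r T A (m + 1)).degree = ((q ^ r * d : ℕ) : WithBot ℕ) := by
          rw [hdeq, hmaindeg]
        rw [natDegree_eq_of_degree_eq_some this, hdd, harith]
        try rw [pow_add]
        try ring
      · rw [hlc, leadingCoeff_pow, hL, ← pow_mul, harith]
        congr 1
        rw [pow_add, pow_add]
        try ring

/-- The polynomial in λ representing `Φ^λ_u(a)` for a general operator polynomial `u`. -/
def stmt13Psi {F : Type*} [Field F] (j : F →+* R) (q r : ℕ) (T A : R) (u : Polynomial F) :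
    Polynomial R :=
  u.sum fun n c => C (j c) * stmt13Q q r T A n

theorem stmt13Psi_add {F : Type*} [Field F] (j : F →+* R) (q r : ℕ) (T A : R)
    (u w : Polynomial F) :
    stmt13Psi j q r T A (u + w) = stmt13Psi j q r T A u + stmt13Psi j q r T A w := by
  unfold stmt13Psi
  exact Polynomial.sum_add_index u w _ (fun n => by simp) (fun n b c => by simp [add_mul])

theorem stmt13Psi_monomial {F : Type*} [Field F] (j : F →+* R) (q r : ℕ) (T A : R)
    (n : ℕ) (c : F) :
    stmt13Psi j q r T A (monomial n c) = C (j c) * stmt13Q q r T A n := by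
  unfold stmt13Psi
  exact Polynomial.sum_monomial_index c _ (by simp)

section Eval

variable {F : Type*} [Field F] (j : F →+* R) (q r : ℕ) (T A : R)
  (φ : R → Polynomial F → R → R)

theorem stmt13_evalQ
    (hmul : ∀ (l : R) (u w : Polynomial F) (x : R), φ l (u * w) x = φ l u (φ l w x))
    (hC : ∀ (l : R) (s : F) (x : R), φ l (Polynomial.C s) x = j s * x)
    (hX : ∀ (l x : R), φ l Polynomial.X x = T * x + l * x ^ q + x ^ q ^ r) :
    ∀ (n : ℕ) (l : R), (stmt13Q q r T A n).eval l = φ l (X ^ n) A := by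
  intro n
  induction n with
  | zero =>
    intro l
    rw [pow_zero, ← C_1, hC]
    simp [stmt13Q]
  | succ m ih =>
    intro l
    rw [pow_succ, mul_comm, hmul, ← ih l, hX]
    simp [stmt13Q]

theorem stmt13_evalPsi
    (hadd : ∀ (l : R) (u w : Polynomial F) (x : R), φ l (u + w) x = φ l u x + φ l w x)
    (hmul : ∀ (l : R) (u w : Polynomial F) (x : R), φ l (u * w) x = φ l u (φ l w x))
    (hC : ∀ (l : R) (s : F) (x : R), φ l (Polynomial.C s) x = j s * x)
    (hX : ∀ (l x : R), φ l Polynomial.X x = T * x + l * x ^ q + x ^ q ^ r) :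
    ∀ (u : Polynomial F) (l : R), (stmt13Psi j q r T A u).eval l = φ l u A := by
  intro u
  induction u using Polynomial.induction_on' with
  | add p s hp hs =>
    intro l
    rw [stmt13Psi_add, eval_add, hp, hs, hadd]
  | monomial n c =>
    intro l
    rw [stmt13Psi_monomial, eval_mul, eval_C, stmt13_evalQ j q r T A φ hmul hC hX n l,
      ← C_mul_X_pow_eq_monomial, hmul, hC]

theorem stmt13Psi_degree_lt {q r : ℕ} (hq : 2 ≤ q) (hr : 2 ≤ r) (T : R) {A : R} (hA : A ≠ 0)
    {u : Polynomial F} {n : ℕ} (hn : 1 ≤ n) (hu : u.natDegree < n) :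
    (stmt13Psi j q r T A u).degree < (stmt13Q q r T A n).degree := by
  obtain ⟨hdn, hLn⟩ := stmt13Q_spec hq hr T hA n hn
  have hQn0 : stmt13Q q r T A n ≠ 0 := fun h => by
    rw [h, leadingCoeff_zero] at hLn
    exact pow_ne_zero _ hA hLn.symm
  have hdegn : (stmt13Q q r T A n).degree = ((q ^ (r * (n - 1)) : ℕ) : WithBot ℕ) := by
    rw [degree_eq_natDegree hQn0, hdn]
  refine lt_of_le_of_lt (degree_sum_le _ _) ?_
  rw [Finset.sup_lt_iff (by rw [hdegn]; exact WithBot.bot_lt_coe _)]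
  intro b hb
  have hbn : b < n := lt_of_le_of_lt (le_natDegree_of_mem_supp b hb) hu
  show (C (j (u.coeff b)) * stmt13Q q r T A b).degree < (stmt13Q q r T A n).degree
  refine lt_of_le_of_lt (stmt13_degree_C_mul_le _ _) ?_
  rcases Nat.eq_zero_or_pos b with rfl | hb1
  · have : (stmt13Q q r T A 0).degree ≤ 0 := by simp [stmt13Q, degree_C_le]
    refine lt_of_le_of_lt this ?_
    rw [hdegn]
    exact_mod_cast Nat.one_le_pow _ _ (by omega)
  · obtain ⟨hdb, hLb⟩ := stmt13Q_spec hq hr T hA b hb1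
    have hQb0 : stmt13Q q r T A b ≠ 0 := fun h => by
      rw [h, leadingCoeff_zero] at hLb
      exact pow_ne_zero _ hA hLb.symm
    rw [degree_eq_natDegree hQb0, hdb, hdegn]
    obtain ⟨b', rfl⟩ : ∃ b', b = b' + 1 := ⟨b - 1, by omega⟩
    obtain ⟨n', rfl⟩ : ∃ n', n = n' + 1 := ⟨n - 1, by omega⟩
    have : q ^ (r * (b' + 1 - 1)) < q ^ (r * (n' + 1 - 1)) := by
      refine Nat.pow_lt_pow_right (by omega) ?_
      simp only [Nat.add_sub_cancel]
      exact mul_lt_mul_of_pos_left (by omega) (by omega)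
    exact_mod_cast this

theorem stmt13_key [IsAlgClosed R] {q r : ℕ} (hq : 2 ≤ q) (hr : 2 ≤ r) (T : R) {A : R}
    (hA : A ≠ 0)
    (hadd : ∀ (l : R) (u w : Polynomial F) (x : R), φ l (u + w) x = φ l u x + φ l w x)
    (hmul : ∀ (l : R) (u w : Polynomial F) (x : R), φ l (u * w) x = φ l u (φ l w x))
    (hC : ∀ (l : R) (s : F) (x : R), φ l (Polynomial.C s) x = j s * x)
    (hX : ∀ (l x : R), φ l Polynomial.X x = T * x + l * x ^ q + x ^ q ^ r)
    {f : Polynomial F} (hf : f.Monic) (hdeg : 1 ≤ f.natDegree) :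
    ∃ l : R, φ l f A = 0 := by
  set n := f.natDegree with hn
  obtain ⟨hdn, hLn⟩ := stmt13Q_spec hq hr T hA n hdeg
  have hQn0 : stmt13Q q r T A n ≠ 0 := fun h => by
    rw [h, leadingCoeff_zero] at hLn
    exact pow_ne_zero _ hA hLn.symm
  have hPsiXn : stmt13Psi j q r T A (X ^ n) = stmt13Q q r T A n := by
    rw [← one_mul ((X : Polynomial F) ^ n), ← C_1, C_mul_X_pow_eq_monomial,
      stmt13Psi_monomial, map_one, C_1, one_mul]
  have hdegeq : (stmt13Psi j q r T A f).degree = (stmt13Q q r T A n).degree := by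
    by_cases h0 : f - X ^ n = 0
    · have hfx : f = X ^ n := by
        have := sub_eq_zero.mp h0
        exact this
      rw [hfx, hPsiXn]
    · have hdfx : f.degree = ((X : Polynomial F) ^ n).degree := by
        rw [degree_X_pow, degree_eq_natDegree hf.ne_zero, hn]
      have hsub : (f - X ^ n).degree < f.degree :=
        degree_sub_lt hdfx hf.ne_zero (by rw [hf.leadingCoeff, leadingCoeff_X_pow])
      have hsubnat : (f - X ^ n).natDegree < n := by
        refine (natDegree_lt_iff_degree_lt h0).mpr ?_
        rwa [degree_eq_natDegree hf.ne_zero, hn] at hsub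
      have hsplit : f = (f - X ^ n) + X ^ n := by ring
      calc (stmt13Psi j q r T A f).degree
          = (stmt13Psi j q r T A (f - X ^ n) + stmt13Psi j q r T A (X ^ n)).degree := by
            rw [← stmt13Psi_add, ← hsplit]
        _ = (stmt13Psi j q r T A (X ^ n)).degree := by
            refine degree_add_eq_right_of_degree_lt ?_
            rw [hPsiXn]
            exact stmt13Psi_degree_lt j hq hr T hA hdeg hsubnat
        _ = (stmt13Q q r T A n).degree := by rw [hPsiXn]
  have hdne : (stmt13Psi j q r T A f).degree ≠ 0 := by
    rw [hdegeq, degree_eq_natDegree hQn0, hdn]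
    have hpos : 0 < q ^ (r * (n - 1)) := pow_pos (by omega) _
    exact_mod_cast hpos.ne'
  obtain ⟨l, hl⟩ := IsAlgClosed.exists_root _ hdne
  refine ⟨l, ?_⟩
  rw [← stmt13_evalPsi j q r T A φ hadd hmul hC hX f l]
  exact hl

end Eval

/-- There are infinitely many monic irreducible polynomials over any field. -/
theorem stmt13_infinite_monic_irreducible (F : Type*) [Field F] :
    {f : Polynomial F | Irreducible f ∧ f.Monic}.Infinite := by
  classical
  by_contra h
  rw [Set.not_infinite] at h
  set s := h.toFinset with hs
  have hprod0 : (∏ f ∈ s, f) ≠ 0 := by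
    refine Finset.prod_ne_zero_iff.mpr fun f hf => ?_
    have : Irreducible f ∧ f.Monic := by rwa [hs, Set.Finite.mem_toFinset] at hf
    exact this.2.ne_zero
  set P : Polynomial F := X * ∏ f ∈ s, f + 1 with hP
  have hdXp : (0 : WithBot ℕ) < (X * ∏ f ∈ s, f).degree := by
    rw [degree_mul, degree_X]
    have : (0 : WithBot ℕ) ≤ (∏ f ∈ s, f).degree := zero_le_degree_iff.mpr hprod0
    calc (0 : WithBot ℕ) < 1 + 0 := by norm_num
      _ ≤ 1 + (∏ f ∈ s, f).degree := by exact add_le_add_right this 1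
  have hdP : 0 < P.degree := by
    rw [hP, add_comm]
    rw [degree_add_eq_right_of_degree_lt (by simpa using hdXp)]
    exact hdXp
  obtain ⟨g, hgirr, hgdvd⟩ := Polynomial.exists_irreducible_of_degree_pos hdP
  have hg0 : g ≠ 0 := hgirr.ne_zero
  set g' := normalize g with hg'
  have hg'm : g'.Monic := Polynomial.monic_normalize hg0
  have hg'irr : Irreducible g' := (associated_normalize g).irreducible hgirr
  have hg'mem : g' ∈ s := by
    rw [hs, Set.Finite.mem_toFinset]
    exact ⟨hg'irr, hg'm⟩
  have hg'P : g' ∣ P := dvd_trans (normalize_dvd_iff.mpr dvd_rfl) hgdvd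
  have hg'prod : g' ∣ X * ∏ f ∈ s, f := Dvd.dvd.mul_left (Finset.dvd_prod_of_mem _ hg'mem) X
  have : g' ∣ 1 := by
    have : (1 : Polynomial F) = P - X * ∏ f ∈ s, f := by rw [hP]; ring
    rw [this]
    exact dvd_sub hg'P hg'prod
  exact hg'irr.not_isUnit (isUnit_of_dvd_one this)

end Stmt13Aux

/-- for the family Φ^λ_t(x) = tx + λx^q + x^{q^r} over a field K
extending F_q(t) in which F_q is algebraically closed, and any nonzero a ∈ K,
there are infinitely many λ in the algebraic closure of K such that a is a
torsion point of Φ^λ. -/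
theorem stmt13 (p k q r : ℕ) [Fact p.Prime]
    (hk : 0 < k) (hq : q = p ^ k) (hr : 2 ≤ r)
    (F : Type*) [Field F] [Fintype F] (hF : Fintype.card F = q)
    {K : Type*} [Field K] [CharP K p] [Algebra F K]
    (t : K) (ht : Transcendental F t)
    (halg : ∀ x : K, IsAlgebraic F x → ∃ y : F, algebraMap F K y = x)
    (a : K) (ha : a ≠ 0)
    (φ : AlgebraicClosure K → Polynomial F → AlgebraicClosure K → AlgebraicClosure K)
    (hadd : ∀ (l : AlgebraicClosure K) (u w : Polynomial F) (x : AlgebraicClosure K),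
      φ l (u + w) x = φ l u x + φ l w x)
    (hmul : ∀ (l : AlgebraicClosure K) (u w : Polynomial F) (x : AlgebraicClosure K),
      φ l (u * w) x = φ l u (φ l w x))
    (hC : ∀ (l : AlgebraicClosure K) (s : F) (x : AlgebraicClosure K),
      φ l (Polynomial.C s) x = algebraMap K (AlgebraicClosure K) (algebraMap F K s) * x)
    (haddx : ∀ (l : AlgebraicClosure K) (u : Polynomial F) (x y : AlgebraicClosure K),
      φ l u (x + y) = φ l u x + φ l u y)
    (hX : ∀ (l x : AlgebraicClosure K),
      φ l Polynomial.X x = algebraMap K (AlgebraicClosure K) t * x + l * x ^ q + x ^ q ^ r) :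
    {l : AlgebraicClosure K | ∃ u : Polynomial F, u ≠ 0 ∧
      φ l u (algebraMap K (AlgebraicClosure K) a) = 0}.Infinite := by
  classical
  have hp2 : 2 ≤ p := (Fact.out : p.Prime).two_le
  have hq2 : 2 ≤ q := by
    rw [hq]
    calc 2 ≤ p := hp2
      _ ≤ p ^ k := Nat.le_self_pow hk.ne' p
  let j : F →+* AlgebraicClosure K :=
    (algebraMap K (AlgebraicClosure K)).comp (algebraMap F K)
  have hA : algebraMap K (AlgebraicClosure K) a ≠ 0 :=
    (map_ne_zero_iff _ (algebraMap K (AlgebraicClosure K)).injective).mpr ha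
  have hC' : ∀ (l : AlgebraicClosure K) (s : F) (x : AlgebraicClosure K),
      φ l (Polynomial.C s) x = j s * x := fun l s x => hC l s x
  have hzero : ∀ (l : AlgebraicClosure K) (u : Polynomial F), φ l u 0 = 0 := fun l u => by
    have h := haddx l u 0 0
    rw [add_zero] at h
    exact (left_eq_add.mp h)
  have key : ∀ f : Polynomial F, f.Monic → 1 ≤ f.natDegree →
      ∃ l : AlgebraicClosure K, φ l f (algebraMap K (AlgebraicClosure K) a) = 0 :=
    fun f hf hd =>
      stmt13_key j φ hq2 hr (algebraMap K (AlgebraicClosure K) t) hA hadd hmul hC' hX hf hd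
  have hinf := stmt13_infinite_monic_irreducible F
  have : Infinite {f : Polynomial F // Irreducible f ∧ f.Monic} := hinf.to_subtype
  have hdegpos : ∀ g : {f : Polynomial F // Irreducible f ∧ f.Monic}, 1 ≤ g.1.natDegree :=
    fun g => natDegree_pos_iff_degree_pos.mpr (Polynomial.degree_pos_of_irreducible g.2.1)
  let lam : {f : Polynomial F // Irreducible f ∧ f.Monic} → AlgebraicClosure K :=
    fun g => Classical.choose (key g.1 g.2.2 (hdegpos g))
  have hlam : ∀ g, φ (lam g) g.1 (algebraMap K (AlgebraicClosure K) a) = 0 :=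
    fun g => Classical.choose_spec (key g.1 g.2.2 (hdegpos g))
  refine Set.infinite_of_injective_forall_mem (f := lam) ?_ ?_
  · intro g1 g2 heq
    by_contra hne
    have hfne : g1.1 ≠ g2.1 := fun h => hne (Subtype.ext h)
    have hnd : ¬ g1.1 ∣ g2.1 := fun hdvd =>
      hfne (Polynomial.eq_of_monic_of_associated g1.2.2 g2.2.2
        (g1.2.1.associated_of_dvd g2.2.1 hdvd))
    have hcop : IsCoprime g1.1 g2.1 := (g1.2.1.coprime_iff_not_dvd).mpr hnd
    obtain ⟨u, v, huv⟩ := hcop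
    have h1 : φ (lam g1) g1.1 (algebraMap K (AlgebraicClosure K) a) = 0 := hlam g1
    have h2 : φ (lam g1) g2.1 (algebraMap K (AlgebraicClosure K) a) = 0 := by
      rw [heq]; exact hlam g2
    have hone : φ (lam g1) (1 : Polynomial F) (algebraMap K (AlgebraicClosure K) a) =
        algebraMap K (AlgebraicClosure K) a := by
      have h := hC' (lam g1) 1 (algebraMap K (AlgebraicClosure K) a)
      rw [Polynomial.C_1, map_one, one_mul] at h
      exact h
    have : algebraMap K (AlgebraicClosure K) a = 0 := by
      calc algebraMap K (AlgebraicClosure K) a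
          = φ (lam g1) 1 (algebraMap K (AlgebraicClosure K) a) := hone.symm
        _ = φ (lam g1) (u * g1.1 + v * g2.1) (algebraMap K (AlgebraicClosure K) a) := by
            rw [huv]
        _ = φ (lam g1) u (φ (lam g1) g1.1 (algebraMap K (AlgebraicClosure K) a))
            + φ (lam g1) v (φ (lam g1) g2.1 (algebraMap K (AlgebraicClosure K) a)) := by
            rw [hadd, hmul, hmul]
        _ = 0 := by rw [h1, h2, hzero, hzero, add_zero]
    exact hA this
  · intro g
    exact ⟨g.1, g.2.2.ne_zero, hlam g⟩
end

section
/- Let q be a prime power, r ≥ 2, a ∈ F_{q^s}× ⊂ F_{q^s}(t), γ ∈ F_{q^s} with γ^{q^r} ≠ γ^q, and set b = γa. Let λ_0 satisfy λ_0 a^q = −t·a − a^{q^r} (so Φ^{λ_0}_t(a) = 0 where Φ^λ_t(x) = tx + λx^q + x^{q^r}). Then, with |·|_∞ the absolute value at infinity of F_{q^s}(t) extended to a field containing λ_0: |λ_0|_∞ = |t|_∞ and |Φ^{λ_0}_t(b)|_∞ = |t|_∞ > max{1, |t|_∞^{1/(q^r−1)}, |λ_0|_∞^{1/(q^r−q)}};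 consequently |Φ^{λ_0}_{t^n}(b)|_∞ → ∞ and b is not torsion for Φ^{λ_0}. -/
set_option maxHeartbeats 1000000


/-- Case 1 of Theorem 1.4: a ∈ F_{q^s}^×, γ ∈ F_{q^s} with
γ^{q^r} ≠ γ^q, b = γa, and λ₀ with λ₀a^q = -ta - a^{q^r} (so Φ^{λ₀}_t(a)=0).
At the place at infinity (|t| > 1): |λ₀| = |t|, |Φ^{λ₀}_t(b)| = |t| exceeds the
escape radius max{1, |t|^{1/(q^r-1)}, |λ₀|^{1/(q^r-q)}}, so the orbit of b
escapes to infinity and b is not torsion (its forward orbit is infinite). -/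
theorem stmt16 {L : Type*} [Field L] (p k q s r : ℕ) [Fact p.Prime] [CharP L p]
    (hk : 0 < k) (hq : q = p ^ k) (hs : 0 < s) (hr : 2 ≤ r)
    (v : AbsoluteValue L ℝ) (hna : ∀ x y : L, v (x + y) ≤ max (v x) (v y))
    (t : L) (ht : 1 < v t)
    (a : L) (ha : a ≠ 0) (haF : a ^ q ^ s = a)
    (γ : L) (hγF : γ ^ q ^ s = γ) (hγ : γ ^ q ^ r ≠ γ ^ q)
    (b : L) (hb : b = γ * a)
    (l0 : L) (hl0 : l0 * a ^ q = -(t * a) - a ^ q ^ r)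
    (Φ : L → L → L)
    (hΦ : ∀ l x : L, Φ l x = t * x + l * x ^ q + x ^ q ^ r) :
    v l0 = v t ∧
    v (Φ l0 b) = v t ∧
    max 1 (max (v t ^ ((1 : ℝ) / ((q : ℝ) ^ r - 1)))
      (v l0 ^ ((1 : ℝ) / ((q : ℝ) ^ r - (q : ℝ))))) < v (Φ l0 b) ∧
    Filter.Tendsto (fun n : ℕ => v ((Φ l0)^[n] b)) Filter.atTop Filter.atTop ∧
    (Set.range fun n : ℕ => (Φ l0)^[n] b).Infinite := by
  have hp2 : 2 ≤ p := (Fact.out : p.Prime).two_le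
  have hq2 : 2 ≤ q := by
    subst hq
    calc 2 ≤ p := hp2
    _ ≤ p ^ k := Nat.le_self_pow hk.ne' p
  -- strict nonarchimedean addition
  have key : ∀ x y : L, v y < v x → v (x + y) = v x := by
    intro x y h
    have h1 := hna x y
    have h2 := hna (x + y) (-y)
    rw [add_neg_cancel_right, v.map_neg] at h2
    rcases le_or_gt (v (x + y)) (v y) with h3 | h3
    · have : v x ≤ v y := le_trans h2 (by simp [h3])
      exact absurd this (not_le.mpr h)
    · exact le_antisymm (le_trans h1 (by simp [le_of_lt h])) (le_trans h2 (by simp [le_of_lt h3]))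
  -- elements fixed by Frobenius^s have absolute value 1
  have hqs2 : 2 ≤ q ^ s := le_trans hq2 (Nat.le_self_pow hs.ne' q)
  have hval1 : ∀ x : L, x ≠ 0 → x ^ q ^ s = x → v x = 1 := by
    intro x hx hfix
    have h0 : 0 < v x := v.pos hx
    have hpow : (v x) ^ (q ^ s) = v x := by rw [← v.map_pow, hfix]
    rcases lt_trichotomy (v x) 1 with h | h | h
    · have h1 : (v x) ^ (q ^ s) ≤ (v x) ^ 2 :=
        pow_le_pow_of_le_one h0.le h.le hqs2
      nlinarith
    · exact h
    · have h1 : (v x) ^ 2 ≤ (v x) ^ (q ^ s) := pow_le_pow_right₀ h.le hqs2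
      nlinarith
  have hva : v a = 1 := hval1 a ha haF
  -- value of l0
  have hvl0 : v l0 = v t := by
    have h1 : v (l0 * a ^ q) = v l0 := by
      rw [v.map_mul, v.map_pow, hva, one_pow, mul_one]
    have h2 : v (-(t * a) - a ^ q ^ r) = v t := by
      rw [sub_eq_add_neg, key _ _ ?_]
      · rw [v.map_neg, v.map_mul, hva, mul_one]
      · rw [v.map_neg, v.map_neg, v.map_pow, hva, one_pow, v.map_mul, hva, mul_one]
        exact ht
    rw [← h1, hl0, h2]
  -- gamma facts
  have hγne : γ - γ ^ q ≠ 0 := by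
    intro h
    have hγq : γ ^ q = γ := (sub_eq_zero.mp h).symm
    have hall : ∀ i : ℕ, γ ^ q ^ i = γ := by
      intro i
      induction i with
      | zero => simp
      | succ n ih => rw [pow_succ, pow_mul, ih, hγq]
    exact hγ ((hall r).trans hγq.symm)
  have hγne2 : γ ^ q ^ r - γ ^ q ≠ 0 := sub_ne_zero.mpr hγ
  have hqs : q ^ s = p ^ (k * s) := by rw [hq, ← pow_mul]
  have hcomm : ∀ m n : ℕ, (γ ^ m) ^ n = (γ ^ n) ^ m := fun m n => by
    rw [← pow_mul, mul_comm, pow_mul]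
  have hd1 : (γ - γ ^ q) ^ q ^ s = γ - γ ^ q := by
    rw [hqs, sub_pow_char_pow, ← hqs, hγF, hcomm q (q ^ s), hγF]
  have hd2 : (γ ^ q ^ r - γ ^ q) ^ q ^ s = γ ^ q ^ r - γ ^ q := by
    rw [hqs, sub_pow_char_pow, ← hqs, hcomm (q ^ r) (q ^ s), hγF, hcomm q (q ^ s), hγF]
  have hvd1 : v (γ - γ ^ q) = 1 := hval1 _ hγne hd1
  have hvd2 : v (γ ^ q ^ r - γ ^ q) = 1 := hval1 _ hγne2 hd2
  -- the key computation
  have hΦb : Φ l0 b = (γ - γ ^ q) * (t * a) + (γ ^ q ^ r - γ ^ q) * a ^ q ^ r := by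
    rw [hΦ, hb, mul_pow, mul_pow]
    linear_combination (γ ^ q) * hl0
  have hvΦb : v (Φ l0 b) = v t := by
    rw [hΦb, key _ _ ?_]
    · rw [v.map_mul, hvd1, v.map_mul, hva, one_mul, mul_one]
    · rw [v.map_mul, hvd2, v.map_pow, hva, one_pow, mul_one,
        v.map_mul, hvd1, v.map_mul, hva, one_mul, mul_one]
      exact ht
  -- numeric facts
  have hq2R : (2 : ℝ) ≤ (q : ℝ) := by exact_mod_cast hq2
  have hqr4 : (4 : ℝ) ≤ (q : ℝ) ^ r := by
    calc (4 : ℝ) = 2 ^ 2 := by norm_num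
    _ ≤ (2 : ℝ) ^ r := pow_le_pow_right₀ one_le_two hr
    _ ≤ (q : ℝ) ^ r := pow_le_pow_left₀ (by norm_num) hq2R r
  have hqrq : (q : ℝ) + 2 ≤ (q : ℝ) ^ r := by
    have h1 : (q : ℝ) ^ 2 ≤ (q : ℝ) ^ r := pow_le_pow_right₀ (by linarith) hr
    nlinarith
  -- escape radius bound
  have hM : max 1 (max (v t ^ ((1 : ℝ) / ((q : ℝ) ^ r - 1)))
      (v l0 ^ ((1 : ℝ) / ((q : ℝ) ^ r - (q : ℝ))))) < v (Φ l0 b) := by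
    rw [hvΦb, hvl0]
    have h1 : (1 : ℝ) < v t := ht
    have hb1 : v t ^ ((1 : ℝ) / ((q : ℝ) ^ r - 1)) < v t := by
      nth_rewrite 2 [show v t = v t ^ (1 : ℝ) from (Real.rpow_one _).symm]
      rw [Real.rpow_lt_rpow_left_iff h1]
      rw [div_lt_one (by linarith)]
      linarith
    have hb2 : v t ^ ((1 : ℝ) / ((q : ℝ) ^ r - (q : ℝ))) < v t := by
      nth_rewrite 2 [show v t = v t ^ (1 : ℝ) from (Real.rpow_one _).symm]
      rw [Real.rpow_lt_rpow_left_iff h1]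
      rw [div_lt_one (by linarith)]
      linarith
    simp only [max_lt_iff]
    exact ⟨h1, hb1, hb2⟩
  -- escape step
  have hN3 : 3 ≤ q ^ r := by
    have : 4 ≤ q ^ r := by
      calc 4 = 2 ^ 2 := rfl
      _ ≤ 2 ^ r := Nat.pow_le_pow_right (by norm_num) hr
      _ ≤ q ^ r := Nat.pow_le_pow_left hq2 r
    omega
  have hNq2 : q + 2 ≤ q ^ r := by
    have h1 : q ^ 2 ≤ q ^ r := Nat.pow_le_pow_right (by omega) hr
    nlinarith
  have step : ∀ x : L, v t ≤ v x → v (Φ l0 x) = v x ^ q ^ r := by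
    intro x hx
    have hvx1 : 1 < v x := lt_of_lt_of_le ht hx
    have hvx0 : 0 < v x := lt_trans one_pos hvx1
    have hbig1 : v (t * x) < v x ^ q ^ r := by
      have h3 : v x ^ 3 ≤ v x ^ q ^ r := pow_le_pow_right₀ hvx1.le hN3
      rw [v.map_mul]
      calc v t * v x ≤ v x * v x := mul_le_mul_of_nonneg_right hx hvx0.le
      _ < v x * v x * v x := (lt_mul_iff_one_lt_right (mul_pos hvx0 hvx0)).mpr hvx1
      _ = v x ^ 3 := by ring
      _ ≤ v x ^ q ^ r := h3
    have hbig2 : v (l0 * x ^ q) < v x ^ q ^ r := by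
      have h3 : v x ^ (q + 2) ≤ v x ^ q ^ r := pow_le_pow_right₀ hvx1.le hNq2
      have hxq : 0 < v x ^ q := pow_pos hvx0 q
      rw [v.map_mul, v.map_pow, hvl0]
      calc v t * v x ^ q ≤ v x * v x ^ q := mul_le_mul_of_nonneg_right hx hxq.le
      _ < v x * v x * v x ^ q := mul_lt_mul_of_pos_right ((lt_mul_iff_one_lt_left hvx0).mpr hvx1) hxq
      _ = v x ^ (q + 2) := by ring
      _ ≤ v x ^ q ^ r := h3
    rw [hΦ, add_comm, key _ _ ?_, v.map_pow]
    calc v (t * x + l0 * x ^ q) ≤ max (v (t * x)) (v (l0 * x ^ q)) := hna _ _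
    _ < v x ^ q ^ r := max_lt hbig1 hbig2
    _ = v (x ^ q ^ r) := (v.map_pow _ _).symm
  -- growth
  have grow : ∀ n : ℕ, v t ^ (n + 1) ≤ v ((Φ l0)^[n + 1] b) := by
    intro n
    induction n with
    | zero => simp [hvΦb]
    | succ n ih =>
      rw [Function.iterate_succ_apply']
      have hx : v t ≤ v ((Φ l0)^[n + 1] b) :=
        le_trans (le_self_pow₀ (le_of_lt ht) (Nat.succ_ne_zero n)) ih
      rw [step _ hx]
      calc v t ^ (n + 1 + 1) ≤ (v t ^ (n + 1)) ^ (q ^ r) := by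
            rw [← pow_mul]
            refine pow_le_pow_right₀ (le_of_lt ht) ?_
            have : 2 ≤ q ^ r := by omega
            nlinarith
      _ ≤ v ((Φ l0)^[n + 1] b) ^ (q ^ r) :=
            pow_le_pow_left₀ (by positivity) ih _
  have htend : Filter.Tendsto (fun n : ℕ => v ((Φ l0)^[n] b)) Filter.atTop Filter.atTop := by
    refine Filter.tendsto_atTop_mono' Filter.atTop ?_
      ((tendsto_pow_atTop_atTop_of_one_lt ht).comp (Filter.tendsto_sub_atTop_nat 1))
    filter_upwards [Filter.eventually_ge_atTop 1] with n hn
    obtain ⟨m, rfl⟩ := Nat.exists_eq_add_of_le hn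
    show v t ^ (1 + m - 1) ≤ v ((Φ l0)^[1 + m] b)
    have he : 1 + m - 1 = m := by omega
    rw [he, add_comm 1 m]
    exact le_trans (pow_le_pow_right₀ ht.le (Nat.le_succ m)) (grow m)
  refine ⟨hvl0, hvΦb, hM, htend, ?_⟩
  by_contra hfin
  rw [Set.not_infinite] at hfin
  obtain ⟨B, hB⟩ := (hfin.image v).bddAbove
  obtain ⟨n, hn⟩ := (htend.eventually_gt_atTop B).exists
  exact absurd (hB ⟨_, ⟨n, rfl⟩, rfl⟩) (not_le.mpr hn)
end
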